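/- arXiv:2206.06209 — 4 statements merged into one kernel-verified Lean document; each statement's English description precedes it below -/
import Mathlib

section
/- Let R be a commutative Noetherian local ring with maximal ideal m_R and residue field 𝔽 = R/m_R, complete with respect to the m_R-adic topology, and in which 2 is a unit. Let G be a group, g₀ ∈ G, and let χ̄₁, χ̄₂ : G → 𝔽ˣ be group homomorphisms with χ̄₁(g₀) ≠ χ̄₂(g₀). Let ρ̄_c : G → GL₂(𝔽) be a group homomorphism such that for every g ∈ G, ρ̄_c(g) = [[χ̄₂(g), b̄(g)],[0, χ̄₁(g)]] for some function b̄ : G → 𝔽 with b̄(g₀) = 0 and with b̄(g') ≠ 0 for some g' ∈ G. Let ρ : G → GL₂(R) be a group homomorphism whose entrywise reduction modulo m_R equals ρ̄_c. If there exist group homomorphisms χ₁, χ₂ : G → Rˣ such that χᵢ reduces to χ̄ᵢ modulo m_R for i = 1,2 and tr(ρ(g)) = χ₁(g) + χ₂(g) for all g ∈ G, then there exists P ∈ GL₂(R) with P ≡ Id (mod m_R) such that P·ρ(g₀)·P⁻¹ is a diagonal matrix and, for every g ∈ G, the matrix P·ρ(g)·P⁻¹ has (2,1)-entry 0, (1,1)-entry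 χ₂(g) and (2,2)-entry χ₁(g). -/
open IsLocalRing Matrix Polynomial

/-- Lemma 2.2 of the paper, in purely algebraic form: let `R` be a complete Noetherian
commutative local ring with residue field `𝔽` in which `2` is a unit, `G` a group,
`χ̄₁, χ̄₂ : G → 𝔽ˣ` homomorphisms with `χ̄₁(g₀) ≠ χ̄₂(g₀)`, and `ρ̄_c : G → GL₂(𝔽)` of the
form `[[χ̄₂, b̄],[0, χ̄₁]]` with `b̄(g₀) = 0` and `b̄` not identically zero.  If
`ρ : G → GL₂(R)` reduces to `ρ̄_c` modulo the maximal ideal and `tr ρ = χ₁ + χ₂` for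
homomorphisms `χᵢ : G → Rˣ` lifting `χ̄ᵢ`, then some `P ∈ GL₂(R)` congruent to the identity
conjugates `ρ(g₀)` into a diagonal matrix and, for every `g`, conjugates `ρ(g)` into an
upper triangular matrix with diagonal `(χ₂(g), χ₁(g))`. -/
theorem stmt_0 {R : Type*} [CommRing R] [IsNoetherianRing R] [IsLocalRing R]
    [IsAdicComplete (maximalIdeal R) R]
    (h2 : IsUnit (2 : R))
    {G : Type*} [Group G] (g₀ : G)
    (χb₁ χb₂ : G →* (ResidueField R)ˣ)
    (hdist : χb₁ g₀ ≠ χb₂ g₀)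
    (ρc : G →* GL (Fin 2) (ResidueField R))
    (b : G → ResidueField R)
    (hb₀ : b g₀ = 0)
    (hbne : ∃ g' : G, b g' ≠ 0)
    (hform : ∀ g : G, (ρc g : Matrix (Fin 2) (Fin 2) (ResidueField R))
      = !![(χb₂ g : ResidueField R), b g; 0, (χb₁ g : ResidueField R)])
    (ρ : G →* GL (Fin 2) R)
    (hred : ∀ g : G, (ρ g : Matrix (Fin 2) (Fin 2) R).map (residue R)
      = (ρc g : Matrix (Fin 2) (Fin 2) (ResidueField R)))
    (χ₁ χ₂ : G →* Rˣ)
    (hlift₁ : ∀ g : G, residue R (χ₁ g : R) = (χb₁ g : ResidueField R))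
    (hlift₂ : ∀ g : G, residue R (χ₂ g : R) = (χb₂ g : ResidueField R))
    (htr : ∀ g : G, Matrix.trace (ρ g : Matrix (Fin 2) (Fin 2) R)
      = (χ₁ g : R) + (χ₂ g : R)) :
    ∃ P : GL (Fin 2) R,
      ((P : Matrix (Fin 2) (Fin 2) R).map (residue R) = 1) ∧
      ((P * ρ g₀ * P⁻¹ : GL (Fin 2) R) : Matrix (Fin 2) (Fin 2) R) 0 1 = 0 ∧
      (∀ g : G,
        ((P * ρ g * P⁻¹ : GL (Fin 2) R) : Matrix (Fin 2) (Fin 2) R) 1 0 = 0 ∧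
        ((P * ρ g * P⁻¹ : GL (Fin 2) R) : Matrix (Fin 2) (Fin 2) R) 0 0 = (χ₂ g : R) ∧
        ((P * ρ g * P⁻¹ : GL (Fin 2) R) : Matrix (Fin 2) (Fin 2) R) 1 1 = (χ₁ g : R)) := by
  classical
  have hdist' : (χb₁ g₀ : ResidueField R) ≠ (χb₂ g₀ : ResidueField R) :=
    fun h => hdist (Units.ext h)
  have hunit : ∀ x : R, residue R x ≠ 0 → IsUnit x :=
    fun x h => (residue_ne_zero_iff_isUnit x).mp h
  have hmem : ∀ x : R, residue R x = 0 → x ∈ maximalIdeal R :=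
    fun x h => Ideal.Quotient.eq_zero_iff_mem.mp h
  set A : Matrix (Fin 2) (Fin 2) R := ((ρ g₀ : GL (Fin 2) R) : Matrix (Fin 2) (Fin 2) R)
    with hAdef
  -- residues of the entries of A
  have hredg₀ : A.map (residue R)
      = !![(χb₂ g₀ : ResidueField R), 0; 0, (χb₁ g₀ : ResidueField R)] := by
    rw [hAdef, hred g₀, hform g₀, hb₀]
  have ra : residue R (A 0 0) = (χb₂ g₀ : ResidueField R) := by
    have := congr_fun (congr_fun hredg₀ 0) 0; simpa [Matrix.map_apply] using this
  have rb : residue R (A 0 1) = 0 := by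
    have := congr_fun (congr_fun hredg₀ 0) 1; simpa [Matrix.map_apply] using this
  have rc : residue R (A 1 0) = 0 := by
    have := congr_fun (congr_fun hredg₀ 1) 0; simpa [Matrix.map_apply] using this
  have rd : residue R (A 1 1) = (χb₁ g₀ : ResidueField R) := by
    have := congr_fun (congr_fun hredg₀ 1) 1; simpa [Matrix.map_apply] using this
  set t : R := (χ₁ g₀ : R) + (χ₂ g₀ : R) with htdef
  have htA : A 0 0 + A 1 1 = t := by
    have := htr g₀; rwa [Matrix.trace_fin_two] at this
  set δ : R := A 0 0 * A 1 1 - A 0 1 * A 1 0 with hδdef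
  have rδ : residue R δ = (χb₂ g₀ : ResidueField R) * (χb₁ g₀ : ResidueField R) := by
    rw [hδdef, _root_.map_sub, _root_.map_mul, _root_.map_mul, ra, rb, rc, rd]; ring
  have rt : residue R t = (χb₁ g₀ : ResidueField R) + (χb₂ g₀ : ResidueField R) := by
    rw [htdef, _root_.map_add, hlift₁, hlift₂]
  -- Hensel's lemma: find the eigenvalue α lifting χb₁ g₀
  obtain ⟨α, hαroot, hαm⟩ :
      ∃ a : R, (X^2 + (C (-t) * X + C δ)).IsRoot a ∧ a - (χ₁ g₀ : R) ∈ maximalIdeal R := by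
    refine HenselianRing.is_henselian (I := maximalIdeal R) _ ?_ _ ?_ ?_
    · exact monic_X_pow_add (lt_of_le_of_lt degree_linear_le (by norm_num))
    · apply hmem
      have heval : ((X:R[X])^2 + (C (-t) * X + C δ)).eval (χ₁ g₀ : R)
          = (χ₁ g₀ : R)^2 - t*(χ₁ g₀ : R) + δ := by simp; ring
      rw [heval, _root_.map_add, _root_.map_sub, _root_.map_mul, map_pow, rt, rδ, hlift₁]
      ring
    · show IsUnit (residue R ((derivative ((X:R[X])^2 + (C (-t) * X + C δ))).eval (χ₁ g₀ : R)))
      have heval : ((derivative ((X:R[X])^2 + (C (-t) * X + C δ)))).eval (χ₁ g₀ : R)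
          = 2*(χ₁ g₀ : R) - t := by simp; ring
      rw [heval]
      apply isUnit_iff_ne_zero.mpr
      rw [_root_.map_sub, _root_.map_mul, rt, hlift₁, map_ofNat]
      intro h
      apply sub_ne_zero.mpr hdist'
      linear_combination h
  have hα : α^2 - t*α + δ = 0 := by
    have h := hαroot; simp [Polynomial.IsRoot] at h
    linear_combination h
  have rα : residue R α = (χb₁ g₀ : ResidueField R) := by
    have h0 : residue R (α - (χ₁ g₀ : R)) = 0 := Ideal.Quotient.eq_zero_iff_mem.mpr hαm
    rw [_root_.map_sub, hlift₁, sub_eq_zero] at h0; exact h0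
  set β : R := t - α with hβdef
  have hβ : β^2 - t*β + δ = 0 := by rw [hβdef]; linear_combination hα
  have rβ : residue R β = (χb₂ g₀ : ResidueField R) := by
    rw [hβdef, _root_.map_sub, rt, rα]; ring
  -- units
  have hu_aα : IsUnit (A 0 0 - α) := by
    apply hunit; rw [_root_.map_sub, ra, rα]
    exact sub_ne_zero.mpr (fun h => hdist' h.symm)
  have hu_dβ : IsUnit (A 1 1 - β) := by
    apply hunit; rw [_root_.map_sub, rd, rβ]
    exact sub_ne_zero.mpr hdist'
  obtain ⟨ia, hia, -⟩ := isUnit_iff_exists.mp hu_aα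
  obtain ⟨ic, hic, -⟩ := isUnit_iff_exists.mp hu_dβ
  -- determinant identities
  have hda : (A 0 0 - α) * (A 1 1 - α) = A 0 1 * A 1 0 := by
    linear_combination hα - α * htA - hδdef
  have hdb : (A 0 0 - β) * (A 1 1 - β) = A 0 1 * A 1 0 := by
    linear_combination hβ - β * htA - hδdef
  set v : R := -(ia * A 0 1) with hvdef
  set w : R := -(ic * A 1 0) with hwdef
  have rv : residue R v = 0 := by rw [hvdef, map_neg, _root_.map_mul, rb]; ring
  have rw' : residue R w = 0 := by rw [hwdef, map_neg, _root_.map_mul, rc]; ring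
  set Q : Matrix (Fin 2) (Fin 2) R := !![1, v; w, 1] with hQdef
  have hQres : Q.map (residue R) = 1 := by
    rw [hQdef]
    ext i j; fin_cases i <;> fin_cases j <;>
      simp [Matrix.map_apply, rv, rw', Matrix.one_apply]
  have hQunit : IsUnit Q := by
    rw [Matrix.isUnit_iff_isUnit_det]
    apply hunit
    have hdet : Q.det = 1 - v * w := by rw [hQdef, Matrix.det_fin_two_of]; ring
    rw [hdet, _root_.map_sub, _root_.map_mul, rv, _root_.map_one]
    simp
  set u : GL (Fin 2) R := hQunit.unit with hudef
  have hu : (u : Matrix (Fin 2) (Fin 2) R) = Q := hQunit.unit_spec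
  -- entrywise eigenvector identities
  have e00 : A 0 0 * 1 + A 0 1 * w = 1 * β + v * 0 := by
    linear_combination ic * hdb - (A 0 0 - β) * hic + A 0 1 * hwdef
  have e01 : A 0 0 * v + A 0 1 * 1 = 1 * 0 + v * α := by
    linear_combination (A 0 0 - α) * hvdef - A 0 1 * hia
  have e10 : A 1 0 * 1 + A 1 1 * w = w * β + 1 * 0 := by
    linear_combination (A 1 1 - β) * hwdef - A 1 0 * hic
  have e11 : A 1 0 * v + A 1 1 * 1 = w * 0 + 1 * α := by
    linear_combination ia * hda - (A 1 1 - α) * hia + A 1 0 * hvdef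
  -- the key eigenvector relation
  have hAQ : A * Q = Q * !![β, 0; 0, α] := by
    rw [Matrix.eta_fin_two A, hQdef, Matrix.mul_fin_two, Matrix.mul_fin_two]
    rw [e00, e01, e10, e11]
  -- inverse matrix facts
  have hiu : ((u⁻¹ : GL (Fin 2) R) : Matrix (Fin 2) (Fin 2) R) * Q = 1 := by
    rw [← hu]; exact u.inv_mul
  have hQu : Q * ((u⁻¹ : GL (Fin 2) R) : Matrix (Fin 2) (Fin 2) R) = 1 := by
    rw [← hu]; exact u.mul_inv
  have hQu' : ∀ X : Matrix (Fin 2) (Fin 2) R,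
      Q * (((u⁻¹ : GL (Fin 2) R) : Matrix (Fin 2) (Fin 2) R) * X) = X := by
    intro X; rw [← mul_assoc, hQu, one_mul]
  set N : G → Matrix (Fin 2) (Fin 2) R :=
    fun g => ((u⁻¹ : GL (Fin 2) R) : Matrix (Fin 2) (Fin 2) R)
      * ((ρ g : GL (Fin 2) R) : Matrix (Fin 2) (Fin 2) R) * Q with hNdef
  have hconj : ∀ g : G,
      ((u⁻¹ * ρ g * (u⁻¹)⁻¹ : GL (Fin 2) R) : Matrix (Fin 2) (Fin 2) R) = N g := by
    intro g
    rw [inv_inv]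
    show ((u⁻¹ * ρ g : GL (Fin 2) R) : Matrix (Fin 2) (Fin 2) R)
      * (u : Matrix (Fin 2) (Fin 2) R) = N g
    rw [Units.val_mul, hu]
  have hNmul : ∀ g h : G, N (g * h) = N g * N h := by
    intro g h
    show ((u⁻¹ : GL (Fin 2) R) : Matrix (Fin 2) (Fin 2) R)
        * ((ρ (g * h) : GL (Fin 2) R) : Matrix (Fin 2) (Fin 2) R) * Q = N g * N h
    rw [map_mul ρ g h, Units.val_mul]
    show _ = ((u⁻¹ : GL (Fin 2) R) : Matrix (Fin 2) (Fin 2) R) * _ * Q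
        * (((u⁻¹ : GL (Fin 2) R) : Matrix (Fin 2) (Fin 2) R) * _ * Q)
    simp only [mul_assoc]
    rw [hQu']
  have htrN : ∀ g : G, (N g).trace = (χ₁ g : R) + (χ₂ g : R) := by
    intro g
    show Matrix.trace (((u⁻¹ : GL (Fin 2) R) : Matrix (Fin 2) (Fin 2) R)
      * ((ρ g : GL (Fin 2) R) : Matrix (Fin 2) (Fin 2) R) * Q) = _
    rw [Matrix.trace_mul_cycle, hQu, one_mul, htr g]
  have hinvres : ((u⁻¹ : GL (Fin 2) R) : Matrix (Fin 2) (Fin 2) R).map (residue R) = 1 := by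
    have h := congrArg (fun M : Matrix (Fin 2) (Fin 2) R => M.map (residue R)) hQu
    simp only [Matrix.map_mul, hQres, one_mul] at h
    rw [h]
    exact Matrix.map_one _ (map_zero _) (map_one _)
  have hresN : ∀ g : G, (N g).map (residue R)
      = (ρc g : Matrix (Fin 2) (Fin 2) (ResidueField R)) := by
    intro g
    show (((u⁻¹ : GL (Fin 2) R) : Matrix (Fin 2) (Fin 2) R)
      * ((ρ g : GL (Fin 2) R) : Matrix (Fin 2) (Fin 2) R) * Q).map (residue R) = _
    rw [Matrix.map_mul, Matrix.map_mul, hinvres, hQres, one_mul, mul_one, hred g]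
  have hN₀ : N g₀ = !![β, 0; 0, α] := by
    show ((u⁻¹ : GL (Fin 2) R) : Matrix (Fin 2) (Fin 2) R) * A * Q = _
    rw [mul_assoc, hAQ, ← mul_assoc, hiu, one_mul]
  -- identify α and β
  have hsum : β + α = (χ₁ g₀ : R) + (χ₂ g₀ : R) := by
    have h := htrN g₀
    rw [hN₀, Matrix.trace_fin_two] at h
    simpa using h
  have hsq : β*β + α*α = (χ₁ g₀ : R)*(χ₁ g₀ : R) + (χ₂ g₀ : R)*(χ₂ g₀ : R) := by
    have h := htrN (g₀ * g₀)
    rw [hNmul g₀ g₀, hN₀, Matrix.trace_fin_two, Matrix.mul_apply, Matrix.mul_apply,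
      Fin.sum_univ_two, Fin.sum_univ_two] at h
    simp only [_root_.map_mul, Units.val_mul] at h
    simp at h
    linear_combination h
  have hαβ : α * β = (χ₁ g₀ : R) * (χ₂ g₀ : R) :=
    h2.mul_left_cancel (by
      linear_combination (β + α + (χ₁ g₀ : R) + (χ₂ g₀ : R)) * hsum - hsq)
  have hu12 : IsUnit ((χ₂ g₀ : R) - (χ₁ g₀ : R)) := by
    apply hunit; rw [_root_.map_sub, hlift₁, hlift₂]
    exact sub_ne_zero.mpr (fun h => hdist' h.symm)
  have huα2 : IsUnit (α - (χ₂ g₀ : R)) := by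
    apply hunit; rw [_root_.map_sub, rα, hlift₂]
    exact sub_ne_zero.mpr hdist'
  have hα1 : α = (χ₁ g₀ : R) := by
    have hprod : (α - (χ₁ g₀ : R)) * (α - (χ₂ g₀ : R)) = 0 := by
      linear_combination α * hsum - hαβ
    exact sub_eq_zero.mp ((IsUnit.mul_left_eq_zero huα2).mp hprod)
  have hβ2 : β = (χ₂ g₀ : R) := by linear_combination hsum - hα1
  have hN₀' : N g₀ = !![(χ₂ g₀ : R), 0; 0, (χ₁ g₀ : R)] := by rw [hN₀, hα1, hβ2]
  -- diagonal entries for every g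
  have hdiag : ∀ g : G, N g 0 0 = (χ₂ g : R) ∧ N g 1 1 = (χ₁ g : R) := by
    intro g
    have h1 := htrN (g₀ * g)
    rw [hNmul g₀ g, hN₀', Matrix.trace_fin_two, Matrix.mul_apply, Matrix.mul_apply,
      Fin.sum_univ_two, Fin.sum_univ_two] at h1
    simp only [_root_.map_mul, Units.val_mul] at h1
    simp at h1
    have h2' := htrN g
    rw [Matrix.trace_fin_two] at h2'
    have ha : N g 0 0 = (χ₂ g : R) :=
      hu12.mul_left_cancel (by linear_combination h1 - (χ₁ g₀ : R) * h2')
    exact ⟨ha, by linear_combination h2' - ha⟩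
  -- off-diagonal relation
  have hrel : ∀ g h : G, N g 0 1 * N h 1 0 + N g 1 0 * N h 0 1 = 0 := by
    intro g h
    have h1 := htrN (g * h)
    rw [hNmul g h, Matrix.trace_fin_two, Matrix.mul_apply, Matrix.mul_apply,
      Fin.sum_univ_two, Fin.sum_univ_two] at h1
    rw [(hdiag g).1, (hdiag g).2, (hdiag h).1, (hdiag h).2] at h1
    simp only [_root_.map_mul, Units.val_mul] at h1
    linear_combination h1
  obtain ⟨g', hbg'⟩ := hbne
  have hBg' : residue R (N g' 0 1) = b g' := by
    have := congr_fun (congr_fun ((hresN g').trans (hform g')) 0) 1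
    simpa [Matrix.map_apply] using this
  have huB : IsUnit (N g' 0 1) := hunit _ (by rw [hBg']; exact hbg')
  have hcg' : N g' 1 0 = 0 := by
    have h0 := hrel g' g'
    have h2x : (2:R) * (N g' 0 1 * N g' 1 0) = 2 * 0 := by linear_combination h0
    exact (IsUnit.mul_right_eq_zero huB).mp (h2.mul_left_cancel h2x)
  have hoff : ∀ g : G, N g 1 0 = 0 := by
    intro g
    have h0 := hrel g' g
    rw [hcg'] at h0
    have hx : N g' 0 1 * N g 1 0 = 0 := by linear_combination h0
    exact (IsUnit.mul_right_eq_zero huB).mp hx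
  refine ⟨u⁻¹, hinvres, ?_, ?_⟩
  · rw [hconj g₀, hN₀']
    simp
  · intro g
    rw [hconj g]
    exact ⟨hoff g, (hdiag g).1, (hdiag g).2⟩
end

section
/- Let R be a commutative ring, G a group, ρ : G → GL₂(R) and χ₁, χ₂ : G → Rˣ group homomorphisms, and g₀ ∈ G such that ρ(g₀) is the diagonal matrix with diagonal entries (χ₂(g₀), χ₁(g₀)), the element χ₂(g₀) − χ₁(g₀) is a unit of R, and tr(ρ(g)) = χ₁(g) + χ₂(g) for all g ∈ G. Then for every g ∈ G the (1,1)-entry of ρ(g) equals χ₂(g) and the (2,2)-entry of ρ(g) equals χ₁(g). If moreover there exists g' ∈ G such that the (1,2)-entry of ρ(g') is a unit of R, then the (2,1)-entry of ρ(g) is 0 for every g ∈ G. -/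
/-- Core computation in the proof of Lemma 2.2 of the paper, after conjugation making
`ρ(g₀)` diagonal: if `ρ(g₀) = diag(χ₂(g₀), χ₁(g₀))` with `χ₂(g₀) - χ₁(g₀)` a unit and
`tr ρ = χ₁ + χ₂`, then the diagonal entries of `ρ(g)` are `χ₂(g)` and `χ₁(g)` for all `g`;
if moreover some `ρ(g')` has unit `(1,2)`-entry, then every `ρ(g)` has `(2,1)`-entry `0`. -/
theorem stmt_2 {R : Type*} [CommRing R] {G : Type*} [Group G]
    (ρ : G →* GL (Fin 2) R) (χ₁ χ₂ : G →* Rˣ) (g₀ : G)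
    (hdiag : (ρ g₀ : Matrix (Fin 2) (Fin 2) R) = !![(χ₂ g₀ : R), 0; 0, (χ₁ g₀ : R)])
    (hunit : IsUnit ((χ₂ g₀ : R) - (χ₁ g₀ : R)))
    (htr : ∀ g : G, Matrix.trace (ρ g : Matrix (Fin 2) (Fin 2) R)
      = (χ₁ g : R) + (χ₂ g : R)) :
    (∀ g : G, (ρ g : Matrix (Fin 2) (Fin 2) R) 0 0 = (χ₂ g : R) ∧
      (ρ g : Matrix (Fin 2) (Fin 2) R) 1 1 = (χ₁ g : R)) ∧
    ((∃ g' : G, IsUnit ((ρ g' : Matrix (Fin 2) (Fin 2) R) 0 1)) →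
      ∀ g : G, (ρ g : Matrix (Fin 2) (Fin 2) R) 1 0 = 0) := by
  have key : ∀ g : G, (ρ g : Matrix (Fin 2) (Fin 2) R) 0 0 = (χ₂ g : R) ∧
      (ρ g : Matrix (Fin 2) (Fin 2) R) 1 1 = (χ₁ g : R) := by
    intro g
    have h1 := htr g
    have h2 := htr (g₀ * g)
    rw [Matrix.trace_fin_two] at h1 h2
    have hmul : ((ρ (g₀ * g) : GL (Fin 2) R) : Matrix (Fin 2) (Fin 2) R)
        = (ρ g₀ : Matrix (Fin 2) (Fin 2) R) * (ρ g : Matrix (Fin 2) (Fin 2) R) := by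
      simp [map_mul]
    rw [hmul, hdiag] at h2
    simp [Matrix.mul_apply, Fin.sum_univ_two] at h2
    have ha : (ρ g : Matrix (Fin 2) (Fin 2) R) 0 0 = (χ₂ g : R) := by
      have h0 : ((χ₂ g₀ : R) - (χ₁ g₀ : R)) *
          ((ρ g : Matrix (Fin 2) (Fin 2) R) 0 0 - (χ₂ g : R)) = 0 := by
        linear_combination h2 - (χ₁ g₀ : R) * h1
      exact sub_eq_zero.mp ((hunit.mul_right_eq_zero).mp h0)
    refine ⟨ha, ?_⟩
    have : (ρ g : Matrix (Fin 2) (Fin 2) R) 1 1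
        = (χ₁ g : R) + (χ₂ g : R) - (ρ g : Matrix (Fin 2) (Fin 2) R) 0 0 := by
      linear_combination h1
    rw [this, ha]; ring
  refine ⟨key, ?_⟩
  rintro ⟨g', hg'⟩ g
  have hmul : ((ρ (g' * g) : GL (Fin 2) R) : Matrix (Fin 2) (Fin 2) R)
      = (ρ g' : Matrix (Fin 2) (Fin 2) R) * (ρ g : Matrix (Fin 2) (Fin 2) R) := by
    simp [map_mul]
  have h00 := (key (g' * g)).1
  rw [hmul] at h00
  simp only [Matrix.mul_apply, Fin.sum_univ_two, map_mul, Units.val_mul] at h00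
  rw [(key g').1, (key g).1] at h00
  have hbc : (ρ g' : Matrix (Fin 2) (Fin 2) R) 0 1 *
      (ρ g : Matrix (Fin 2) (Fin 2) R) 1 0 = 0 := by
    linear_combination h00
  exact (hg'.mul_right_eq_zero).mp hbc
end

section
/- Let 𝔽 be a field, G a group, H a subgroup of G, and g₀ ∈ H. Let χ̄₁, χ̄₂ : G → 𝔽ˣ be group homomorphisms with χ̄₁(g₀) ≠ χ̄₂(g₀), and set χ̄ = χ̄₁·χ̄₂⁻¹. Let f : G → 𝔽 be a function, not identically zero, satisfying the cocycle relation f(gh) = f(g) + χ̄(g)⁻¹·f(h) for all g, h ∈ G, such that f(h) = 0 for all h ∈ H, and assume that every function f'' : G → 𝔽 satisfying the same cocycle relation and vanishing identically on H is an 𝔽-scalar multiple of f. Define ρ̄_c : G → GL₂(𝔽) by ρ̄_c(g) = [[χ̄₂(g), χ̄₁(g)·f(g)],[0, χ̄₁(g)]]. Let 𝔽[ε] = 𝔽[X]/(X²) be the ring of dual numbers over 𝔽 and let ρ : G → GL₂(𝔽[ε]) be a group homomorphism such that: the entrywise reduction of ρ modulo (ε) equals ρ̄_c; ρ(h) is a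 diagonal matrix for every h ∈ H; and, for all g ∈ G, tr(ρ(g)) = χ̄₁(g) + χ̄₂(g) and det(ρ(g)) = χ̄₁(g)·χ̄₂(g), where 𝔽 is viewed inside 𝔽[ε] via the canonical inclusion. Then there exists P ∈ GL₂(𝔽[ε]) with P ≡ Id (mod ε) such that P·ρ(g)·P⁻¹ = ρ̄_c(g) (viewed in GL₂(𝔽[ε]) via the inclusion 𝔽 → 𝔽[ε]) for every g ∈ G. -/
/-!
Write `ρ g = ρ̄_c g + ε T g`. Multiplicativity of `ρ` gives
`T (g h) = ρ̄_c g * T h + T g * ρ̄_c h`, the trace condition gives `tr (T g) = 0`, and the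
determinant condition gives `tr (adj (ρ̄_c g) * T g) = 0`. At `g₀` both `f` and the lower-left
entry of `T` vanish, so these relations together with `χ̄₁ g₀ ≠ χ̄₂ g₀` kill the diagonal of `T`;
as `f ≠ 0`, the lower-left entry of `T` vanishes everywhere, and then `χ̄₁⁻¹` times the upper-right
entry is a cocycle vanishing on `H`, hence equal to `x • f`. Thus `T g` is the commutator
`[ρ̄_c g, diag(0, x)]`, which conjugation by `1 + ε diag(0, x)` removes.
-/

open Matrix TrivSqZeroExt DualNumber

theorem Matrix.ext_fst_snd {R m n : Type*} {M N : Matrix m n R[ε]}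
    (hfst : M.map fst = N.map fst) (hsnd : M.map snd = N.map snd) : M = N := by
  ext i j
  · exact congrFun (congrFun hfst i) j
  · exact congrFun (congrFun hsnd i) j

section CommSemiring

variable {R : Type*} [CommSemiring R] {n : Type*} [Fintype n]

theorem Matrix.map_fst_mul (M N : Matrix n n R[ε]) :
    (M * N).map fst = M.map fst * N.map fst :=
  Matrix.map_mul (f := fstHom R R R)

theorem Matrix.map_snd_mul (M N : Matrix n n R[ε]) :
    (M * N).map snd = M.map fst * N.map snd + M.map snd * N.map fst := by
  ext i j
  simp [Matrix.mul_apply, snd_sum, Finset.sum_add_distrib]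

theorem Matrix.snd_trace (M : Matrix n n R[ε]) : M.trace.snd = (M.map snd).trace :=
  AddMonoidHom.map_trace (sndHom R R) M

theorem Matrix.map_inr_mul_map_inr (N N' : Matrix n n R) :
    N.map inr * N'.map inr = (0 : Matrix n n R[ε]) := by
  ext i j <;> simp [mul_apply]

end CommSemiring

section CommRing

variable {R : Type*} [CommRing R] {n : Type*} [Fintype n] [DecidableEq n]

-- Jacobi's formula for the derivative of the determinant, in size 2.
theorem Matrix.snd_det_fin_two (M : Matrix (Fin 2) (Fin 2) R[ε]) :
    M.det.snd = (adjugate (M.map fst) * M.map snd).trace := by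
  simp [det_fin_two, adjugate_fin_two, trace_fin_two, vecMul, dotProduct, Fin.sum_univ_two]
  ring

def Matrix.oneAddEps (N : Matrix n n R) : GL n R[ε] where
  val := 1 + N.map inr
  inv := 1 - N.map inr
  val_inv := by rw [add_mul, mul_sub, mul_sub, map_inr_mul_map_inr]; simp
  inv_val := by rw [sub_mul, mul_add, mul_add, map_inr_mul_map_inr]; simp

theorem Matrix.map_fst_oneAddEps (N : Matrix n n R) :
    (oneAddEps N : Matrix n n R[ε]).map fst = 1 := by
  ext i j; by_cases h : i = j <;> simp [oneAddEps, one_apply, h]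

theorem Matrix.map_snd_oneAddEps (N : Matrix n n R) :
    (oneAddEps N : Matrix n n R[ε]).map snd = N := by
  ext i j; by_cases h : i = j <;> simp [oneAddEps, h]

theorem Matrix.map_fst_oneAddEps_inv (N : Matrix n n R) :
    (((oneAddEps N)⁻¹ : GL n R[ε]) : Matrix n n R[ε]).map fst = 1 := by
  ext i j; by_cases h : i = j <;> simp [oneAddEps, one_apply, h]

theorem Matrix.map_snd_oneAddEps_inv (N : Matrix n n R) :
    (((oneAddEps N)⁻¹ : GL n R[ε]) : Matrix n n R[ε]).map snd = -N := by
  ext i j; by_cases h : i = j <;> simp [oneAddEps, h]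

theorem Matrix.oneAddEps_conj_eq_map_inl (N : Matrix n n R) {M : Matrix n n R[ε]}
    (hM : M.map snd = M.map fst * N - N * M.map fst) :
    (oneAddEps N : Matrix n n R[ε]) * M * (((oneAddEps N)⁻¹ : GL n R[ε]) : Matrix n n R[ε]) =
      (M.map fst).map inl := by
  apply ext_fst_snd
  · rw [map_fst_mul, map_fst_mul, map_fst_oneAddEps, map_fst_oneAddEps_inv, map_map]
    simp
  · rw [map_snd_mul, map_snd_mul, map_fst_mul, map_fst_oneAddEps, map_snd_oneAddEps,
      map_fst_oneAddEps_inv, map_snd_oneAddEps_inv, hM, map_map]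
    simp only [one_mul, mul_one, Function.comp_def, snd_inl, mul_neg]
    change _ = 0
    abel

end CommRing

section NonsplitExtension

variable {F G : Type*} [Field F] [Group G] (χ₁ χ₂ : G →* Fˣ)

-- The paper's `ρ̄_c g`.
def extensionMatrix (f : G → F) (g : G) : Matrix (Fin 2) (Fin 2) F :=
  !![(χ₂ g : F), χ₁ g * f g; 0, χ₁ g]

def IsCocycle (c : G → F) : Prop :=
  ∀ g h : G, c (g * h) = c g + (((χ₁ g)⁻¹ * χ₂ g : Fˣ) : F) * c h

variable {χ₁ χ₂} {f : G → F}

theorem trace_adjugate_extensionMatrix_mul (g : G) (X : Matrix (Fin 2) (Fin 2) F) :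
    (adjugate (extensionMatrix χ₁ χ₂ f g) * X).trace =
      χ₁ g * X 0 0 - χ₁ g * f g * X 1 0 + χ₂ g * X 1 1 := by
  rw [extensionMatrix, adjugate_fin_two_of, eta_fin_two X, mul_fin_two, trace_fin_two_of]
  simp only [of_apply, cons_val', cons_val_zero, cons_val_one, empty_val', cons_val_fin_one]
  ring

theorem extensionMatrix_mul_sub_mul_comm (g : G) (x : F) :
    extensionMatrix χ₁ χ₂ f g * !![0, 0; 0, x] - !![0, 0; 0, x] * extensionMatrix χ₁ χ₂ f g =
      !![0, χ₁ g * (x * f g); 0, 0] := by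
  rw [extensionMatrix, mul_fin_two, mul_fin_two, sub_eq_iff_eq_add]
  ext i j
  fin_cases i <;> fin_cases j <;> simp <;> ring

section Tangent

variable {T : G → Matrix (Fin 2) (Fin 2) F}
  (hT : ∀ g h, T (g * h) = extensionMatrix χ₁ χ₂ f g * T h + T g * extensionMatrix χ₁ χ₂ f h)
include hT

theorem tangent_mul_zero_zero (g h : G) :
    T (g * h) 0 0 = χ₂ g * T h 0 0 + χ₁ g * f g * T h 1 0 + T g 0 0 * χ₂ h := by
  simpa [extensionMatrix, mul_apply, vecMul, dotProduct, Fin.sum_univ_two] using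
    congrFun₂ (hT g h) 0 0

theorem tangent_mul_zero_one (g h : G) :
    T (g * h) 0 1 = χ₂ g * T h 0 1 + χ₁ g * f g * T h 1 1 +
      (T g 0 0 * (χ₁ h * f h) + T g 0 1 * χ₁ h) := by
  simpa [extensionMatrix, mul_apply, vecMul, dotProduct, Fin.sum_univ_two] using
    congrFun₂ (hT g h) 0 1

theorem tangent_mul_one_one (g h : G) :
    T (g * h) 1 1 = χ₁ g * T h 1 1 + (T g 1 0 * (χ₁ h * f h) + T g 1 1 * χ₁ h) := by
  simpa [extensionMatrix, mul_apply, vecMul, dotProduct, Fin.sum_univ_two] using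
    congrFun₂ (hT g h) 1 1

theorem tangent_zero_zero_eq_zero {g₀ : G} (hdist : χ₁ g₀ ≠ χ₂ g₀) (hf : f g₀ = 0)
    (hC : T g₀ 1 0 = 0) (htr : ∀ g, (T g).trace = 0)
    (hdet : (adjugate (extensionMatrix χ₁ χ₂ f g₀) * T g₀).trace = 0) (g : G) : T g 0 0 = 0 := by
  have hdist' : (χ₁ g₀ : F) - χ₂ g₀ ≠ 0 := sub_ne_zero.2 (Units.val_injective.ne hdist)
  have hD : ∀ g, T g 1 1 = -T g 0 0 := fun g ↦ by
    linear_combination (trace_fin_two (T g)).symm.trans (htr g)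
  have hA₀ : T g₀ 0 0 = 0 := by
    rw [trace_adjugate_extensionMatrix_mul, hf, hD] at hdet
    exact (mul_eq_zero.1 (by linear_combination hdet)).resolve_left hdist'
  have h00 := tangent_mul_zero_zero hT g₀ g
  have h11 := tangent_mul_one_one hT g₀ g
  rw [hD, hD, hD, hA₀, hC] at h11
  rw [hf, hA₀] at h00
  refine (mul_eq_zero.1 ?_).resolve_left hdist'
  linear_combination h11 + h00

theorem tangent_one_zero_eq_zero (hA : ∀ g, T g 0 0 = 0) (hf : ∃ g, f g ≠ 0) (g : G) :
    T g 1 0 = 0 := by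
  obtain ⟨g₁, hg₁⟩ := hf
  have h00 := tangent_mul_zero_zero hT g₁ g
  rw [hA, hA, hA] at h00
  refine (mul_eq_zero.1 ?_).resolve_left (mul_ne_zero (χ₁ g₁).ne_zero hg₁)
  linear_combination -h00

theorem isCocycle_tangent_zero_one (hA : ∀ g, T g 0 0 = 0) (hD : ∀ g, T g 1 1 = 0) :
    IsCocycle χ₁ χ₂ fun g ↦ (χ₁ g : F)⁻¹ * T g 0 1 := by
  intro g h
  dsimp only
  rw [tangent_mul_zero_one hT, hA, hD, _root_.map_mul, Units.val_mul, Units.val_mul,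
    Units.val_inv_eq_inv_val]
  field_simp
  ring

theorem exists_tangent_eq_commutator (H : Subgroup G) {g₀ : G} (hg₀ : g₀ ∈ H)
    (hdist : χ₁ g₀ ≠ χ₂ g₀) (hfne : ∃ g, f g ≠ 0) (hfH : ∀ h ∈ H, f h = 0)
    (hspan : ∀ c : G → F, IsCocycle χ₁ χ₂ c → (∀ h ∈ H, c h = 0) → ∃ x : F, ∀ g, c g = x * f g)
    (hTH : ∀ h ∈ H, T h 0 1 = 0 ∧ T h 1 0 = 0) (htr : ∀ g, (T g).trace = 0)
    (hdet : ∀ g, (adjugate (extensionMatrix χ₁ χ₂ f g) * T g).trace = 0) :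
    ∃ x : F, ∀ g, T g = extensionMatrix χ₁ χ₂ f g * !![0, 0; 0, x] -
      !![0, 0; 0, x] * extensionMatrix χ₁ χ₂ f g := by
  have hA := tangent_zero_zero_eq_zero hT hdist (hfH g₀ hg₀) (hTH g₀ hg₀).2 htr (hdet g₀)
  have hC := tangent_one_zero_eq_zero hT hA hfne
  have hD : ∀ g, T g 1 1 = 0 := fun g ↦ by
    simpa [trace_fin_two, hA] using htr g
  obtain ⟨x, hx⟩ := hspan _ (isCocycle_tangent_zero_one hT hA hD)
    fun h hh ↦ by rw [(hTH h hh).1, mul_zero]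
  refine ⟨x, fun g ↦ ?_⟩
  rw [extensionMatrix_mul_sub_mul_comm, eta_fin_two (T g), hA, hC, hD, ← hx, ← mul_assoc,
    mul_inv_cancel₀ (χ₁ g).ne_zero, one_mul]

end Tangent

end NonsplitExtension

theorem stmt_3_general {𝔽 : Type*} [Field 𝔽] {G : Type*} [Group G]
    (H : Subgroup G) (g₀ : G) (hg₀ : g₀ ∈ H)
    (χb₁ χb₂ : G →* 𝔽ˣ)
    (hdist : χb₁ g₀ ≠ χb₂ g₀)
    (f : G → 𝔽)
    (hfne : ∃ g : G, f g ≠ 0)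
    (hfH : ∀ h ∈ H, f h = 0)
    (hspan : ∀ f'' : G → 𝔽,
      (∀ g h : G, f'' (g * h) = f'' g + (((χb₁ g)⁻¹ * χb₂ g : 𝔽ˣ) : 𝔽) * f'' h) →
      (∀ h ∈ H, f'' h = 0) →
      ∃ x : 𝔽, ∀ g : G, f'' g = x * f g)
    (ρ : G →* GL (Fin 2) (DualNumber 𝔽))
    (hred : ∀ g : G, ∀ i j : Fin 2,
      ((ρ g : Matrix (Fin 2) (Fin 2) (DualNumber 𝔽)) i j).fst
        = (!![(χb₂ g : 𝔽), (χb₁ g : 𝔽) * f g; 0, (χb₁ g : 𝔽)] : Matrix (Fin 2) (Fin 2) 𝔽) i j)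
    (hHdiag : ∀ h ∈ H, (ρ h : Matrix (Fin 2) (Fin 2) (DualNumber 𝔽)) 0 1 = 0 ∧
      (ρ h : Matrix (Fin 2) (Fin 2) (DualNumber 𝔽)) 1 0 = 0)
    (htr : ∀ g : G, Matrix.trace (ρ g : Matrix (Fin 2) (Fin 2) (DualNumber 𝔽))
      = algebraMap 𝔽 (DualNumber 𝔽) ((χb₁ g : 𝔽) + (χb₂ g : 𝔽)))
    (hdet : ∀ g : G, Matrix.det (ρ g : Matrix (Fin 2) (Fin 2) (DualNumber 𝔽))
      = algebraMap 𝔽 (DualNumber 𝔽) ((χb₁ g : 𝔽) * (χb₂ g : 𝔽))) :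
    ∃ P : GL (Fin 2) (DualNumber 𝔽),
      (∀ i j : Fin 2, ((P : Matrix (Fin 2) (Fin 2) (DualNumber 𝔽)) i j).fst
        = (1 : Matrix (Fin 2) (Fin 2) 𝔽) i j) ∧
      (∀ g : G, ((P * ρ g * P⁻¹ : GL (Fin 2) (DualNumber 𝔽))
          : Matrix (Fin 2) (Fin 2) (DualNumber 𝔽))
        = (!![(χb₂ g : 𝔽), (χb₁ g : 𝔽) * f g; 0, (χb₁ g : 𝔽)]
            : Matrix (Fin 2) (Fin 2) 𝔽).map (algebraMap 𝔽 (DualNumber 𝔽))) := by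
  have hfst : ∀ g, (ρ g : Matrix (Fin 2) (Fin 2) 𝔽[ε]).map fst =
      extensionMatrix χb₁ χb₂ f g := fun g ↦ Matrix.ext (hred g)
  set T : G → Matrix (Fin 2) (Fin 2) 𝔽 := fun g ↦ (ρ g : Matrix (Fin 2) (Fin 2) 𝔽[ε]).map snd
  have hT : ∀ g h, T (g * h) =
      extensionMatrix χb₁ χb₂ f g * T h + T g * extensionMatrix χb₁ χb₂ f h :=
    fun g h ↦ by simp only [T, _root_.map_mul, Units.val_mul, map_snd_mul, hfst]
  have htrT : ∀ g, (T g).trace = 0 := fun g ↦ by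
    rw [← snd_trace, htr g, algebraMap_eq_inl, snd_inl]
  have hdetT : ∀ g, (adjugate (extensionMatrix χb₁ χb₂ f g) * T g).trace = 0 := fun g ↦ by
    rw [← hfst, ← snd_det_fin_two, hdet g, algebraMap_eq_inl, snd_inl]
  obtain ⟨x, hx⟩ := exists_tangent_eq_commutator hT H hg₀ hdist hfne hfH hspan
    (fun h hh ↦ ⟨congrArg snd (hHdiag h hh).1, congrArg snd (hHdiag h hh).2⟩) htrT hdetT
  refine ⟨oneAddEps !![0, 0; 0, x], fun i j ↦ congrFun₂ (map_fst_oneAddEps _) i j, fun g ↦ ?_⟩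
  rw [Units.val_mul, Units.val_mul, oneAddEps_conj_eq_map_inl _ (by rw [hfst]; exact hx g), hfst,
    algebraMap_eq_inl]
  rfl

/-- The representation-theoretic core of Lemma 2.3 of the paper: let `𝔽` be a field,
`H ≤ G`, `g₀ ∈ H`, `χ̄₁, χ̄₂ : G → 𝔽ˣ` with `χ̄₁(g₀) ≠ χ̄₂(g₀)`, and let `f` be a nonzero
cocycle for `χ̄⁻¹ = χ̄₁⁻¹χ̄₂` vanishing on `H`, spanning the space of such cocycles.  Then any
deformation `ρ` of `ρ̄_c = [[χ̄₂, χ̄₁·f],[0, χ̄₁]]` to the dual numbers `𝔽[ε]` which is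
diagonal on `H` and satisfies `tr ρ = χ̄₁ + χ̄₂`, `det ρ = χ̄₁·χ̄₂` is conjugate to `ρ̄_c` by
a matrix congruent to the identity mod `ε`. -/
theorem stmt_3 {𝔽 : Type*} [Field 𝔽] {G : Type*} [Group G]
    (H : Subgroup G) (g₀ : G) (hg₀ : g₀ ∈ H)
    (χb₁ χb₂ : G →* 𝔽ˣ)
    (hdist : χb₁ g₀ ≠ χb₂ g₀)
    (f : G → 𝔽)
    (hfne : ∃ g : G, f g ≠ 0)
    (hcocycle : ∀ g h : G,
      f (g * h) = f g + (((χb₁ g)⁻¹ * χb₂ g : 𝔽ˣ) : 𝔽) * f h)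
    (hfH : ∀ h ∈ H, f h = 0)
    (hspan : ∀ f'' : G → 𝔽,
      (∀ g h : G, f'' (g * h) = f'' g + (((χb₁ g)⁻¹ * χb₂ g : 𝔽ˣ) : 𝔽) * f'' h) →
      (∀ h ∈ H, f'' h = 0) →
      ∃ x : 𝔽, ∀ g : G, f'' g = x * f g)
    (ρ : G →* GL (Fin 2) (DualNumber 𝔽))
    (hred : ∀ g : G, ∀ i j : Fin 2,
      ((ρ g : Matrix (Fin 2) (Fin 2) (DualNumber 𝔽)) i j).fst
        = (!![(χb₂ g : 𝔽), (χb₁ g : 𝔽) * f g; 0, (χb₁ g : 𝔽)] : Matrix (Fin 2) (Fin 2) 𝔽) i j)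
    (hHdiag : ∀ h ∈ H, (ρ h : Matrix (Fin 2) (Fin 2) (DualNumber 𝔽)) 0 1 = 0 ∧
      (ρ h : Matrix (Fin 2) (Fin 2) (DualNumber 𝔽)) 1 0 = 0)
    (htr : ∀ g : G, Matrix.trace (ρ g : Matrix (Fin 2) (Fin 2) (DualNumber 𝔽))
      = algebraMap 𝔽 (DualNumber 𝔽) ((χb₁ g : 𝔽) + (χb₂ g : 𝔽)))
    (hdet : ∀ g : G, Matrix.det (ρ g : Matrix (Fin 2) (Fin 2) (DualNumber 𝔽))
      = algebraMap 𝔽 (DualNumber 𝔽) ((χb₁ g : 𝔽) * (χb₂ g : 𝔽))) :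
    ∃ P : GL (Fin 2) (DualNumber 𝔽),
      (∀ i j : Fin 2, ((P : Matrix (Fin 2) (Fin 2) (DualNumber 𝔽)) i j).fst
        = (1 : Matrix (Fin 2) (Fin 2) 𝔽) i j) ∧
      (∀ g : G, ((P * ρ g * P⁻¹ : GL (Fin 2) (DualNumber 𝔽))
          : Matrix (Fin 2) (Fin 2) (DualNumber 𝔽))
        = (!![(χb₂ g : 𝔽), (χb₁ g : 𝔽) * f g; 0, (χb₁ g : 𝔽)]
            : Matrix (Fin 2) (Fin 2) 𝔽).map (algebraMap 𝔽 (DualNumber 𝔽))) :=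
  stmt_3_general H g₀ hg₀ χb₁ χb₂ hdist f hfne hfH hspan ρ hred hHdiag htr hdet
end

section
/- Let R be a commutative ring, let u, v, s ∈ R, and let A = [[s, u],[v, s]] be the corresponding 2×2 matrix over R. Then: (i) for every natural number n there exist f, h ∈ R such that Aⁿ = [[f, u·h],[v·h, f]]; and (ii) if moreover s² = 1 + u·v and s + 1 is a unit of R, then f and h in (i) can be chosen so that, in addition, f − 1 and h − n·1 both lie in the principal ideal of R generated by u·v. -/
private lemma aux_pow {R : Type*} [CommRing R] (u v s : R) (n : ℕ) :
    ∃ f h : R,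
      (!![s, u; v, s] : Matrix (Fin 2) (Fin 2) R) ^ n = !![f, u * h; v * h, f] ∧
      (u * v ∣ s - 1 → u * v ∣ f - 1 ∧ u * v ∣ h - (n : R)) := by
  induction n with
  | zero =>
    refine ⟨1, 0, ?_, fun _ => ⟨by simp, by simp⟩⟩
    simp [Matrix.one_fin_two]
  | succ n ih =>
    obtain ⟨f, h, hA, hdvd⟩ := ih
    refine ⟨f * s + u * v * h, f + h * s, ?_, ?_⟩
    · rw [pow_succ, hA, Matrix.mul_fin_two]
      congr 1 <;> ring
    · intro hs
      obtain ⟨hf, hh⟩ := hdvd hs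
      constructor
      · have : f * s + u * v * h - 1 = (f - 1) * s + (s - 1) + u * v * h := by ring
        rw [this]
        exact dvd_add (dvd_add (hf.mul_right _) hs) (Dvd.intro _ rfl)
      · have : f + h * s - ((n + 1 : ℕ) : R)
            = (f - 1) + (h - (n : R)) * s + (n : R) * (s - 1) := by
          push_cast; ring
        rw [this]
        exact dvd_add (dvd_add hf (hh.mul_right _)) (hs.mul_left _)

/-- Matrix identity underlying the analysis of tame ramification (Lemmas 2.5, 2.6,
Propositions 2.7 and 5.2): for `A = [[s,u],[v,s]]` over a commutative ring `R`,
(i) every power `Aⁿ` has the form `[[f, u·h],[v·h, f]]`, and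
(ii) if moreover `s² = 1 + u·v` and `s + 1` is a unit, then `f` and `h` can be chosen with
`f - 1` and `h - n` in the ideal generated by `u·v`. -/
theorem stmt_4 {R : Type*} [CommRing R] (u v s : R) (n : ℕ) :
    (∃ f h : R,
      (!![s, u; v, s] : Matrix (Fin 2) (Fin 2) R) ^ n = !![f, u * h; v * h, f]) ∧
    (s ^ 2 = 1 + u * v → IsUnit (s + 1) →
      ∃ f h : R,
        (!![s, u; v, s] : Matrix (Fin 2) (Fin 2) R) ^ n = !![f, u * h; v * h, f] ∧
        f - 1 ∈ Ideal.span {u * v} ∧ h - (n : R) ∈ Ideal.span {u * v}) := by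
  obtain ⟨f, h, hA, hdvd⟩ := aux_pow u v s n
  refine ⟨⟨f, h, hA⟩, fun hs hu => ?_⟩
  obtain ⟨w, hw⟩ := hu.exists_right_inv
  have hdvd1 : u * v ∣ s - 1 := by
    refine ⟨w, ?_⟩
    have : s - 1 = (s - 1) * ((s + 1) * w) := by rw [hw]; ring
    rw [this]
    have h2 : (s - 1) * (s + 1) = u * v := by
      linear_combination hs
    calc (s - 1) * ((s + 1) * w) = (s - 1) * (s + 1) * w := by ring
      _ = u * v * w := by rw [h2]
  obtain ⟨hf, hh⟩ := hdvd hdvd1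
  exact ⟨f, h, hA, Ideal.mem_span_singleton.2 hf, Ideal.mem_span_singleton.2 hh⟩
end
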